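/- Let n ≥ 2 be a natural number and let P₀ be a complex polynomial of degree n. Consider the coefficient space ℂ^{n+1} (maps Fin (n+1) → ℂ with its product topology), where a coefficient vector c corresponds to the polynomial p_c(z) = Σ_{i=0}^{n} c_i z^i, and let S ⊆ ℂ^{n+1} be the subspace S = { c : for every z ∈ ℂ, −|p_c''(z)|²/(1 + |p_c'(z)|²)² = −|P₀''(z)|²/(1 + |P₀'(z)|²)² }, equipped with the subspace topology. Then the fundamental group of S (at the basepoint given by the coefficient vector of P₀, which lies in S) is not trivial, i.e. it is not a subsingleton. -/

import Mathlib

/-!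
Multiplying `P₀` by `exp (2πit)` does not change its curvature, so these rotations form a loop
in `S`. Pick `z₀` with `P₀''(z₀) ≠ 0`. The curvature at `z₀` vanishes exactly when the second
derivative does, so `c ↦ p_c''(z₀)` maps `S` into `ℂ ∖ {0}`, and it sends the loop to a circle
winding once around `0`. Lifting along the covering `exp : ℂ → ℂ ∖ {0}` turns that circle into a
path from `log (P₀''(z₀))` to `log (P₀''(z₀)) + 2πi`, whereas a null-homotopic loop would lift
to a closed path.
-/

open Complex Polynomial

theorem Path.not_homotopic_refl_of_winding {X : Type*} [TopologicalSpace X] {x : X}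
    (γ : Path x x) (φ : C(X, ℂ)) (hφ : ∀ y, φ y ≠ 0)
    (hγ : ∀ t : unitInterval, φ (γ t) = exp (2 * Real.pi * I * (t : ℝ)) * φ x) :
    ¬ γ.Homotopic (Path.refl x) := by
  intro h
  let ψ : C(X, {z : ℂ // z ≠ 0}) := ⟨fun y => ⟨φ y, hφ y⟩, φ.continuous.subtype_mk _⟩
  set e := log (φ x)
  have hexp : exp e = φ x := exp_log (hφ x)
  have hpe : ψ x = ⟨exp e, exp_ne_zero e⟩ := Subtype.ext hexp.symm
  let Γ : C(unitInterval, ℂ) := ⟨fun t => e + 2 * Real.pi * I * (t : ℝ), by fun_prop⟩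
  have hΓ : Γ = isCoveringMap_exp.liftPath (γ.map ψ.continuous).toContinuousMap e
      (by simpa using hpe) := by
    refine (isCoveringMap_exp.eq_liftPath_iff' _).mpr ⟨funext fun t => ?_, by simp [Γ]⟩
    ext
    simp [Γ, ψ, exp_add, hγ, hexp, mul_comm]
  have hconst : ContinuousMap.const unitInterval e = isCoveringMap_exp.liftPath
      ((Path.refl x).map ψ.continuous).toContinuousMap e (by simpa using hpe) :=
    (isCoveringMap_exp.eq_liftPath_iff' _).mpr ⟨funext fun t => by simp [hpe], rfl⟩
  have hend := isCoveringMap_exp.liftPath_apply_one_eq_of_homotopicRel (h.map ψ) e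
    (by simpa using hpe) (by simpa using hpe)
  rw [← hΓ, ← hconst] at hend
  simp [Γ, Real.pi_ne_zero] at hend

theorem not_subsingleton_fundamentalGroup_of_forall_norm_eq_one_smul_mem {V : Type*}
    [AddCommGroup V] [Module ℂ V] [TopologicalSpace V] [ContinuousSMul ℂ V]
    {S : Set V} {v : V} (hv : v ∈ S) (hS : ∀ a : ℂ, ‖a‖ = 1 → a • v ∈ S)
    (ℓ : V →L[ℂ] ℂ) (hℓ : ∀ w ∈ S, ℓ w ≠ 0) :
    ¬ Subsingleton (FundamentalGroup S ⟨v, hv⟩) := by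
  have hnorm (t : ℝ) : ‖exp (2 * Real.pi * I * t)‖ = 1 := by
    rw [show 2 * Real.pi * I * t = ((2 * Real.pi * t : ℝ) : ℂ) * I by push_cast; ring]
    exact norm_exp_ofReal_mul_I _
  let γ : Path (⟨v, hv⟩ : S) ⟨v, hv⟩ :=
    { toFun t := ⟨exp (2 * Real.pi * I * (t : ℝ)) • v, hS _ (hnorm t)⟩
      continuous_toFun := by fun_prop
      source' := by simp
      target' := by simp [exp_two_pi_mul_I] }
  let φ : C(S, ℂ) := ⟨fun w => ℓ w, by fun_prop⟩
  intro hsub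
  refine γ.not_homotopic_refl_of_winding φ (fun w => hℓ w w.2) (fun t => by simp [φ, γ]) ?_
  exact Path.Homotopic.Quotient.exact (hsub.elim (.mk γ) (.mk (.refl _)))

theorem Polynomial.eval_ofFn {R : Type*} [CommSemiring R] [DecidableEq R] {n : ℕ}
    (c : Fin n → R) (x : R) : (ofFn n c).eval x = ∑ i : Fin n, c i * x ^ (i : ℕ) := by
  simp [ofFn_eq_sum_monomial, eval_finsetSum]

theorem Polynomial.deriv_fun_eval {𝕜 : Type*} [NontriviallyNormedField 𝕜] (p : 𝕜[X]) :
    deriv (fun x => p.eval x) = fun x => p.derivative.eval x := by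
  funext x
  exact Polynomial.deriv p

noncomputable def graphCurvature (f : ℂ → ℂ) (z : ℂ) : ℝ :=
  -‖deriv (deriv f) z‖ ^ 2 / (1 + ‖deriv f z‖ ^ 2) ^ 2

theorem graphCurvature_const_mul {a : ℂ} (ha : ‖a‖ = 1) (f : ℂ → ℂ) :
    graphCurvature (fun w => a * f w) = graphCurvature f := by
  funext z
  simp [graphCurvature, deriv_const_mul_field', ha]

theorem graphCurvature_eq_zero_iff {f : ℂ → ℂ} {z : ℂ} :
    graphCurvature f z = 0 ↔ deriv (deriv f) z = 0 := by
  have : (1 + ‖deriv f z‖ ^ 2) ^ 2 ≠ 0 := by positivity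
  simp [graphCurvature, this]

/-- For `n ≥ 2` and a complex polynomial `P₀` of degree `n`, the space `S` of
coefficient vectors `c ∈ ℂ^{n+1}` whose associated polynomial
`p_c(z) = Σ cᵢ zⁱ` has the same curvature function as `P₀` has nontrivial
fundamental group at the coefficient vector of `P₀` (which lies in `S`). -/
theorem fundamentalGroup_of_same_curvature_space_nontrivial
    (n : ℕ) (hn : 2 ≤ n) (P₀ : Polynomial ℂ) (hdeg : P₀.natDegree = n)
    (S : Set (Fin (n + 1) → ℂ))
    (hS : S = {c : Fin (n + 1) → ℂ | ∀ z : ℂ,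
      -(norm (deriv (deriv (fun w : ℂ => ∑ i : Fin (n + 1), c i * w ^ (i : ℕ))) z)) ^ 2 /
          (1 + (norm (deriv (fun w : ℂ => ∑ i : Fin (n + 1), c i * w ^ (i : ℕ)) z)) ^ 2) ^ 2
      =
      -(norm ((Polynomial.derivative (Polynomial.derivative P₀)).eval z)) ^ 2 /
          (1 + (norm ((Polynomial.derivative P₀).eval z)) ^ 2) ^ 2}) :
    ∃ h : (fun i : Fin (n + 1) => P₀.coeff (i : ℕ)) ∈ S,
      ¬ Subsingleton (FundamentalGroup S ⟨fun i : Fin (n + 1) => P₀.coeff (i : ℕ), h⟩) := by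
  have hS' : S = {c | graphCurvature (fun w => (ofFn (n + 1) c).eval w) =
      graphCurvature (fun w => P₀.eval w)} := by
    ext c
    simp only [hS, Set.mem_ofPred_eq, funext_iff, graphCurvature, eval_ofFn, deriv_fun_eval]
  have hP₀ : ofFn (n + 1) (fun i => P₀.coeff i) = P₀ :=
    ofFn_comp_toFn_eq_id_of_natDegree_lt (by omega)
  have hrot : ∀ a : ℂ, ‖a‖ = 1 → a • (fun i : Fin (n + 1) => P₀.coeff i) ∈ S := by
    intro a ha
    simp [hS', graphCurvature_const_mul ha, hP₀]
  obtain ⟨z₀, hz₀⟩ : ∃ z₀, P₀.derivative.derivative.eval z₀ ≠ 0 := by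
    by_contra! h
    exact (derivative_ne_zero (p := P₀.derivative)).mpr (by rw [natDegree_derivative, hdeg]; omega)
      (Polynomial.funext (by simpa using h))
  let ℓ := (leval z₀ ∘ₗ derivative ∘ₗ derivative ∘ₗ ofFn (n + 1)).toContinuousLinearMap
  have hℓ : ∀ c ∈ S, ℓ c ≠ 0 := by
    intro c hc hc₀
    have hflat : graphCurvature (fun w => (ofFn (n + 1) c).eval w) z₀ = 0 :=
      graphCurvature_eq_zero_iff.mpr (by simpa [deriv_fun_eval, ℓ] using hc₀)
    rw [hS'] at hc
    rw [congrFun hc z₀, graphCurvature_eq_zero_iff, deriv_fun_eval, deriv_fun_eval] at hflat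
    exact hz₀ hflat
  have h₀ : (fun i : Fin (n + 1) => P₀.coeff i) ∈ S := by simpa using hrot 1 norm_one
  exact ⟨h₀, not_subsingleton_fundamentalGroup_of_forall_norm_eq_one_smul_mem h₀ hrot ℓ hℓ⟩
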